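/- arXiv:math/9911202 — 5 statements merged into one kernel-verified Lean document; each statement's English description precedes it below -/
import Mathlib

section
/- Every continuous Γ-equivariant linear map T : V → W between linear subshifts V ⊆ (Γ → 𝔽₂)^r and W ⊆ (Γ → 𝔽₂)^s is given by right multiplication by an s × r matrix with entries in the group algebra 𝔽₂[Γ]: there exists M ∈ Mat_{s×r}(𝔽₂[Γ]) such that T(v) = T_M(v) for all v ∈ V. -/
open Filter Topology Pointwise

instance : TopologicalSpace (ZMod 2) := ⊥
instance : DiscreteTopology (ZMod 2) := ⟨rfl⟩

variable {G : Type*} [Group G] [DecidableEq G]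

/-- Left translation action on functions. -/
def ltv (M : Type*) (γ : G) (f : G → M) : G → M := fun δ => f (γ⁻¹ * δ)

/-- A `Γ`-invariant linear subspace. -/
def InvariantSub (M : Type*) [AddCommGroup M] [Module (ZMod 2) M]
    (W : Submodule (ZMod 2) (G → M)) : Prop :=
  ∀ γ : G, ∀ f ∈ W, ltv M γ f ∈ W

/-- The space of restrictions of elements of `W` to `Λ`. -/
noncomputable def resSpace {M : Type*} [AddCommGroup M] [Module (ZMod 2) M]
    (W : Submodule (ZMod 2) (G → M)) (Λ : Finset G) :
    Submodule (ZMod 2) (↥Λ → M) :=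
  W.map (LinearMap.funLeft (ZMod 2) M (Subtype.val : ↥Λ → G))

/-- The entropy of a `Γ`-invariant linear subspace, along a Følner exhaustion. -/
noncomputable def entropy {M : Type*} [AddCommGroup M] [Module (ZMod 2) M]
    (F : ℕ → Finset G) (W : Submodule (ZMod 2) (G → M)) : ℝ :=
  Filter.limsup
    (fun n => (Module.finrank (ZMod 2) ↥(resSpace W (F n)) : ℝ) / (F n).card) atTop

/-- `S` is a finite symmetric generating set containing `1`. -/
def SymmGen (S : Finset G) : Prop :=
  (1 : G) ∈ S ∧ (∀ s ∈ S, s⁻¹ ∈ S) ∧ Subgroup.closure (S : Set G) = ⊤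

/-- A Følner exhaustion with respect to the word metric of `S`:
`S ^ r * F n` is the `r`-neighbourhood of `F n`. -/
structure FolnerSeq (S : Finset G) (F : ℕ → Finset G) : Prop where
  one_mem : (1 : G) ∈ F 0
  mono : Monotone F
  exhaust : ∀ g : G, ∃ n, g ∈ F n
  folner : ∀ r : ℕ,
    Tendsto (fun n => (((S ^ r * F n) \ F n).card : ℝ) / (F n).card) atTop (𝓝 0)

/-- Right multiplication of a column vector `v ∈ (Γ → 𝔽₂)^r` by an `s × r` matrix with
entries in the group algebra `𝔽₂[Γ]`:
`(T_M v)_i(x) = Σ_j Σ_γ (M i j)(γ) ⬝ v_j(xγ)`. -/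
noncomputable def matMul {r s : ℕ}
    (M : Matrix (Fin s) (Fin r) (MonoidAlgebra (ZMod 2) G))
    (v : G → Fin r → ZMod 2) : G → Fin s → ZMod 2 :=
  fun x i => ∑ j, Finsupp.sum (M i j).coeff (fun γ c => c * v (x * γ) j)

/-! By equivariance, `T v` at `x` is `T` of the translate `L_{x⁻¹} v` evaluated at `1`, so `T`
is determined by the functional `e = ev₁ ∘ T`. Continuity of `e` into the discrete space `𝔽₂ˢ`
makes it depend only on the restriction of `v` to a finite window `Λ ⊆ Γ`, hence `e` factors
through a linear map `(Λ → 𝔽₂ʳ) → 𝔽₂ˢ`; its coefficients, placed at the points of `Λ`, are the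
entries of `M`. -/

theorem LinearMap.exists_comp_eq_of_ker_le {K V V' V'' : Type*} [DivisionRing K]
    [AddCommGroup V] [Module K V] [AddCommGroup V'] [Module K V'] [AddCommGroup V'']
    [Module K V''] (π : V →ₗ[K] V') (e : V →ₗ[K] V'')
    (h : LinearMap.ker π ≤ LinearMap.ker e) :
    ∃ φ : V' →ₗ[K] V'', φ ∘ₗ π = e := by
  obtain ⟨φ, hφ⟩ :=
    ((LinearMap.ker π).liftQ e h ∘ₗ π.quotKerEquivRange.symm.toLinearMap).exists_extend
  refine ⟨φ, LinearMap.ext fun v => ?_⟩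
  simpa [LinearMap.quotKerEquivRange_symm_apply_image] using
    LinearMap.congr_fun hφ ⟨π v, LinearMap.mem_range_self π v⟩

theorem pi_eq_sum_smul_single_single {R ι κ : Type*} [Semiring R] [Fintype ι] [Fintype κ]
    [DecidableEq ι] [DecidableEq κ] (w : ι → κ → R) :
    w = ∑ i, ∑ j, w i j • Pi.single i (Pi.single j 1) := by
  ext i j
  simp [Finset.sum_apply, Pi.single_apply, ite_apply, Finset.sum_ite_eq]

theorem LinearMap.apply_eq_sum_smul_single_single {R ι κ N : Type*} [Semiring R]
    [AddCommMonoid N] [Module R N] [Fintype ι] [Fintype κ] [DecidableEq ι] [DecidableEq κ]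
    (φ : (ι → κ → R) →ₗ[R] N) (w : ι → κ → R) :
    φ w = ∑ i, ∑ j, w i j • φ (Pi.single i (Pi.single j 1)) := by
  conv_lhs => rw [pi_eq_sum_smul_single_single w]
  simp only [map_sum, map_smul]

theorem exists_finset_forall_eq_zero_of_continuous {K ι M N : Type*} [Semiring K]
    [AddCommMonoid M] [Module K M] [TopologicalSpace M] [AddCommMonoid N] [Module K N]
    [TopologicalSpace N] [DiscreteTopology N] {V : Submodule K (ι → M)}
    (e : V →ₗ[K] N) (he : Continuous e) :
    ∃ Λ : Finset ι, ∀ v : V, (∀ i ∈ Λ, (v : ι → M) i = 0) → e v = 0 := by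
  have h0 : e ⁻¹' {0} ∈ 𝓝 (0 : V) := he.continuousAt.preimage_mem_nhds (by simp)
  obtain ⟨U, hU, hUe⟩ := (mem_nhds_subtype _ _ _).1 h0
  rw [nhds_pi, Filter.mem_pi'] at hU
  obtain ⟨Λ, t, ht, htU⟩ := hU
  refine ⟨Λ, fun v hv => hUe (htU fun i hi => ?_)⟩
  simpa [hv i hi] using mem_of_mem_nhds (ht i)

theorem exists_finset_linearMap_restrict_of_continuous {K ι M N : Type*} [DivisionRing K]
    [AddCommGroup M] [Module K M] [TopologicalSpace M] [AddCommGroup N] [Module K N]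
    [TopologicalSpace N] [DiscreteTopology N] {V : Submodule K (ι → M)}
    (e : V →ₗ[K] N) (he : Continuous e) :
    ∃ (Λ : Finset ι) (φ : (Λ → M) →ₗ[K] N), ∀ v : V, e v = φ fun i => (v : ι → M) i := by
  obtain ⟨Λ, hΛ⟩ := exists_finset_forall_eq_zero_of_continuous e he
  let π : V →ₗ[K] (Λ → M) := LinearMap.funLeft K M Subtype.val ∘ₗ V.subtype
  obtain ⟨φ, hφ⟩ := π.exists_comp_eq_of_ker_le e fun v hv =>
    hΛ v fun i hi => congrFun hv ⟨i, hi⟩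
  exact ⟨Λ, φ, fun v => (LinearMap.congr_fun hφ v).symm⟩

omit [DecidableEq G] in
theorem matMul_ofCoeff_sum_single {r s : ℕ} (Λ : Finset G) (c : Fin s → Fin r → Λ → ZMod 2)
    (v : G → Fin r → ZMod 2) (x : G) (i : Fin s) :
    matMul (fun i j => MonoidAlgebra.ofCoeff (∑ γ : Λ, Finsupp.single (γ : G) (c i j γ))) v x i
      = ∑ γ : Λ, ∑ j, c i j γ * v (x * γ) j := by
  simp only [matMul]
  rw [Finset.sum_comm]
  refine Finset.sum_congr rfl fun j _ => ?_
  rw [← Finsupp.sum_finsetSum_index (fun _ => by simp) (fun _ _ _ => by ring)]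
  exact Finset.sum_congr rfl fun γ _ => Finsupp.sum_single_index (by simp)

theorem equivariant_map_is_matrix_general (r s : ℕ)
    (V : Submodule (ZMod 2) (G → Fin r → ZMod 2))
    (hVi : InvariantSub (Fin r → ZMod 2) V)
    (T : ↥V →ₗ[ZMod 2] (G → Fin s → ZMod 2))
    (hTcont : Continuous T)
    (hTequi : ∀ γ : G, ∀ v : ↥V,
      T ⟨ltv _ γ ↑v, hVi γ ↑v v.2⟩ = ltv _ γ (T v)) :
    ∃ M : Matrix (Fin s) (Fin r) (MonoidAlgebra (ZMod 2) G),
      ∀ v : ↥V, T v = matMul M ↑v := by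
  let e := LinearMap.proj (R := ZMod 2) (φ := fun _ : G => Fin s → ZMod 2) 1 ∘ₗ T
  obtain ⟨Λ, φ, hφ⟩ :=
    exists_finset_linearMap_restrict_of_continuous e ((continuous_apply 1).comp hTcont)
  refine ⟨fun i j => MonoidAlgebra.ofCoeff
    (∑ γ : Λ, Finsupp.single (γ : G) (φ (Pi.single γ (Pi.single j 1)) i)), fun v => ?_⟩
  ext x i
  have hTvx : T v x = e ⟨ltv _ x⁻¹ v, hVi x⁻¹ v v.2⟩ := by
    simp [e, hTequi, ltv]
  rw [matMul_ofCoeff_sum_single, hTvx, hφ, φ.apply_eq_sum_smul_single_single]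
  simp [ltv, mul_comm]

/-- Every continuous `Γ`-equivariant linear map `T : V → W` between linear
subshifts is given by right multiplication by an `s × r` matrix over `𝔽₂[Γ]`. -/
theorem equivariant_map_is_matrix (r s : ℕ)
    (V : Submodule (ZMod 2) (G → Fin r → ZMod 2))
    (W : Submodule (ZMod 2) (G → Fin s → ZMod 2))
    (hVc : IsClosed (V : Set (G → Fin r → ZMod 2)))
    (hVi : InvariantSub (Fin r → ZMod 2) V)
    (hWc : IsClosed (W : Set (G → Fin s → ZMod 2)))
    (hWi : InvariantSub (Fin s → ZMod 2) W)
    (T : ↥V →ₗ[ZMod 2] (G → Fin s → ZMod 2))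
    (hTW : ∀ v : ↥V, T v ∈ W)
    (hTcont : Continuous T)
    (hTequi : ∀ γ : G, ∀ v : ↥V,
      T ⟨ltv _ γ ↑v, hVi γ ↑v v.2⟩ = ltv _ γ (T v)) :
    ∃ M : Matrix (Fin s) (Fin r) (MonoidAlgebra (ZMod 2) G),
      ∀ v : ↥V, T v = matMul M ↑v :=
  equivariant_map_is_matrix_general r s V hVi T hTcont hTequi
end

section
/- Pontryagin duality gives a one-to-one correspondence between linear subshifts V ⊆ (Γ → 𝔽₂)^r (for varying r) and finitely generated left 𝔽₂[Γ]-modules: the annihilator construction V ↦ (𝔽₂[Γ])^r / V^⊥ sends linear subshifts to finitely generated modules, isomorphic subshifts correspond to isomorphic modules, and every finitely generated left 𝔽₂[Γ]-module arises this way. -/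
open Filter Topology Pointwise

variable {G : Type*} [Group G] [DecidableEq G]

/-- The duality pairing `⟨χ, f⟩ = Σ_i Σ_γ χ_i(γ) f_i(γ)` between
`(𝔽₂[Γ])^r` and `(Γ → 𝔽₂)^r`. -/
noncomputable def dualPair {r : ℕ} (χ : Fin r → MonoidAlgebra (ZMod 2) G)
    (f : G → Fin r → ZMod 2) : ZMod 2 :=
  ∑ i, Finsupp.sum (χ i).coeff (fun γ c => c * f γ i)

/-- The annihilator `V^⊥ ⊆ (𝔽₂[Γ])^r` of a set `V ⊆ (Γ → 𝔽₂)^r`. -/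
def perpSet {r : ℕ} (V : Set (G → Fin r → ZMod 2)) :
    Set (Fin r → MonoidAlgebra (ZMod 2) G) :=
  {χ | ∀ f ∈ V, dualPair χ f = 0}

/-!
Pairing identifies `(𝔽₂[Γ])^r` with the continuous dual of `(Γ → 𝔽₂)^r`: a continuous functional
on a subshift `V` only sees finitely many coordinates, so it is a combination of coordinate
evaluations, i.e. the pairing with some `χ`. Thus `(𝔽₂[Γ])^r ⧸ V^⊥` is the continuous dual of `V`,
and a continuous equivariant isomorphism `V ≃ W` matches the two quotients through the graph of
pairs `(χ, χ')` inducing corresponding functionals; this graph is an `𝔽₂[Γ]`-submodule because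
translation on `V` is dual to multiplication by group elements. Conversely, every functional on the
free module `(𝔽₂[Γ])^r` is a pairing, so `(N^⊥)^⊥ = N` for every submodule `N`, and a presentation
`(𝔽₂[Γ])^n ⧸ N` of a finitely generated module is the module of the closed invariant subshift `N^⊥`.
-/

open scoped MonoidAlgebra

local notation "𝔽₂" => ZMod 2

theorem exists_finite_forall_eq_of_continuous {ι E Y : Type*} [TopologicalSpace E]
    [TopologicalSpace Y] [DiscreteTopology Y] {p : (ι → E) → Prop} {φ : Subtype p → Y}
    (hφ : Continuous φ) (x₀ : Subtype p) :
    ∃ I : Set ι, I.Finite ∧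
      ∀ x : Subtype p, (∀ i ∈ I, (x : ι → E) i = (x₀ : ι → E) i) → φ x = φ x₀ := by
  have h : φ ⁻¹' {φ x₀} ∈ 𝓝 x₀ := hφ.continuousAt ((isOpen_discrete _).mem_nhds rfl)
  rw [nhds_induced, Filter.mem_comap] at h
  obtain ⟨s, hs, hsub⟩ := h
  rw [nhds_pi, Filter.mem_pi] at hs
  obtain ⟨I, hI, t, ht, hts⟩ := hs
  exact ⟨I, hI, fun x hx => hsub (hts fun i hi => hx i hi ▸ mem_of_mem_nhds (ht i))⟩

theorem Submodule.nonempty_quotient_linearEquiv_of_graph {R X Y : Type*} [Ring R]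
    [AddCommGroup X] [Module R X] [AddCommGroup Y] [Module R Y] (P : Submodule R (X × Y))
    {N : Submodule R X} {N' : Submodule R Y} (hfst : ∀ x, ∃ y, (x, y) ∈ P)
    (hsnd : ∀ y, ∃ x, (x, y) ∈ P) (hmem : ∀ x y, (x, y) ∈ P → (x ∈ N ↔ y ∈ N')) :
    Nonempty ((X ⧸ N) ≃ₗ[R] (Y ⧸ N')) := by
  let f : P →ₗ[R] X ⧸ N := N.mkQ ∘ₗ LinearMap.fst R X Y ∘ₗ P.subtype
  let g : P →ₗ[R] Y ⧸ N' := N'.mkQ ∘ₗ LinearMap.snd R X Y ∘ₗ P.subtype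
  have hf : Function.Surjective f := by
    rintro ⟨x⟩
    obtain ⟨y, hy⟩ := hfst x
    exact ⟨⟨(x, y), hy⟩, rfl⟩
  have hg : Function.Surjective g := by
    rintro ⟨y⟩
    obtain ⟨x, hx⟩ := hsnd y
    exact ⟨⟨(x, y), hx⟩, rfl⟩
  have hker : LinearMap.ker f = LinearMap.ker g := by
    ext ⟨⟨x, y⟩, h⟩
    simpa [f, g] using hmem x y h
  exact ⟨(f.quotKerEquivOfSurjective hf).symm ≪≫ₗ Submodule.quotEquivOfEq _ _ hker ≪≫ₗ
    g.quotKerEquivOfSurjective hg⟩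

def Submodule.toMonoidAlgebra {k G M : Type*} [CommSemiring k] [Monoid G] [AddCommMonoid M]
    [Module k M] [Module k[G] M] [IsScalarTower k k[G] M] (p : Submodule k M)
    (hp : ∀ g, ∀ x ∈ p, MonoidAlgebra.of k G g • x ∈ p) : Submodule k[G] M where
  toAddSubmonoid := p.toAddSubmonoid
  smul_mem' a x hx := a.induction_on (hp · x hx)
    (fun a b ha hb => (add_smul a b x).symm ▸ p.add_mem ha hb)
    (fun c a ha => (smul_assoc c a x).symm ▸ p.smul_mem c ha)

theorem MonoidAlgebra.pi_lhom_ext {k G ι M : Type*} [CommSemiring k] [Finite ι] [DecidableEq ι]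
    [AddCommMonoid M] [Module k M] {φ ψ : (ι → k[G]) →ₗ[k] M}
    (h : ∀ i g c, φ (Pi.single i (single g c)) = ψ (Pi.single i (single g c))) : φ = ψ :=
  LinearMap.pi_ext' fun i => lhom_ext' fun g => LinearMap.ext (h i g)

section Pairing

variable {Γ : Type*} {r : ℕ}

lemma dualPair_add_left (χ₁ χ₂ : Fin r → 𝔽₂[Γ]) (f : Γ → Fin r → 𝔽₂) :
    dualPair (χ₁ + χ₂) f = dualPair χ₁ f + dualPair χ₂ f := by
  simp only [dualPair, Pi.add_apply, MonoidAlgebra.coeff_add, ← Finset.sum_add_distrib]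
  exact Finset.sum_congr rfl fun i _ => Finsupp.sum_add_index' (by simp) fun _ _ _ => add_mul _ _ _

lemma dualPair_smul_left (c : 𝔽₂) (χ : Fin r → 𝔽₂[Γ]) (f : Γ → Fin r → 𝔽₂) :
    dualPair (c • χ) f = c • dualPair χ f := by
  simp only [dualPair, Pi.smul_apply, MonoidAlgebra.coeff_smul, smul_eq_mul, Finset.mul_sum]
  refine Finset.sum_congr rfl fun i _ => ?_
  rw [Finsupp.sum_smul_index' fun _ => zero_mul _, Finsupp.mul_sum]
  simp only [smul_eq_mul, mul_assoc]

lemma dualPair_add_right (χ : Fin r → 𝔽₂[Γ]) (f₁ f₂ : Γ → Fin r → 𝔽₂) :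
    dualPair χ (f₁ + f₂) = dualPair χ f₁ + dualPair χ f₂ := by
  simp only [dualPair, Pi.add_apply, mul_add, Finsupp.sum_add, Finset.sum_add_distrib]

lemma dualPair_smul_right (c : 𝔽₂) (χ : Fin r → 𝔽₂[Γ]) (f : Γ → Fin r → 𝔽₂) :
    dualPair χ (c • f) = c • dualPair χ f := by
  simp only [dualPair, Pi.smul_apply, smul_eq_mul, Finset.mul_sum, Finsupp.mul_sum]
  exact Finset.sum_congr rfl fun i _ => Finsupp.sum_congr fun _ _ => by ring

noncomputable def dualPairₗ : (Fin r → 𝔽₂[Γ]) →ₗ[𝔽₂] (Γ → Fin r → 𝔽₂) →ₗ[𝔽₂] 𝔽₂ :=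
  LinearMap.mk₂ 𝔽₂ dualPair dualPair_add_left dualPair_smul_left dualPair_add_right
    dualPair_smul_right

@[simp]
lemma dualPairₗ_apply (χ : Fin r → 𝔽₂[Γ]) (f : Γ → Fin r → 𝔽₂) : dualPairₗ χ f = dualPair χ f :=
  rfl

lemma dualPair_single_single (i : Fin r) (γ : Γ) (c : 𝔽₂) (f : Γ → Fin r → 𝔽₂) :
    dualPair (Pi.single i (MonoidAlgebra.single γ c)) f = c * f γ i := by
  rw [dualPair, Fintype.sum_eq_single i fun j hj => by simp [hj]]
  simp

lemma dualPair_of_smul [Group Γ] (γ : Γ) (χ : Fin r → 𝔽₂[Γ]) (f : Γ → Fin r → 𝔽₂) :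
    dualPair (MonoidAlgebra.of 𝔽₂ Γ γ • χ) f = dualPair χ (ltv _ γ⁻¹ f) := by
  have := MonoidAlgebra.pi_lhom_ext (φ := dualPairₗ.flip f ∘ₗ
      DistribSMul.toLinearMap 𝔽₂ (Fin r → 𝔽₂[Γ]) (MonoidAlgebra.of 𝔽₂ Γ γ))
    (ψ := dualPairₗ.flip (ltv _ γ⁻¹ f)) fun i δ c => by
      simp [← Pi.single_smul', MonoidAlgebra.single_mul_single, dualPair_single_single, ltv]
  exact LinearMap.congr_fun this χ

lemma continuous_dualPair (χ : Fin r → 𝔽₂[Γ]) : Continuous (dualPair χ) :=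
  continuous_finsetSum _ fun i _ => continuous_finsetSum _ fun γ _ =>
    continuous_of_discreteTopology.comp ((continuous_apply i).comp (continuous_apply γ))

lemma surjective_dualPairₗ_flip :
    Function.Surjective (dualPairₗ (Γ := Γ) (r := r)).flip := fun φ =>
  ⟨fun γ i => φ (Pi.single i (MonoidAlgebra.single γ 1)),
    MonoidAlgebra.pi_lhom_ext fun i γ c => by
    rw [LinearMap.flip_apply, dualPairₗ_apply, dualPair_single_single, ← smul_eq_mul, ← map_smul,
      ← Pi.single_smul', MonoidAlgebra.smul_single, smul_eq_mul, mul_one]⟩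

end Pairing

section Continuity

variable {Γ : Type*} {r : ℕ} {V : Submodule 𝔽₂ (Γ → Fin r → 𝔽₂)}

variable (V) in
noncomputable def dualPairOn : (Fin r → 𝔽₂[Γ]) →ₗ[𝔽₂] Module.Dual 𝔽₂ V :=
  dualPairₗ.compl₂ V.subtype

@[simp]
lemma dualPairOn_apply (χ : Fin r → 𝔽₂[Γ]) (v : V) : dualPairOn V χ v = dualPair χ v :=
  rfl

lemma dualPairOn_eq_zero_iff {χ : Fin r → 𝔽₂[Γ]} :
    dualPairOn V χ = 0 ↔ χ ∈ perpSet (V : Set (Γ → Fin r → 𝔽₂)) :=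
  ⟨fun h f hf => LinearMap.congr_fun h ⟨f, hf⟩, fun h => LinearMap.ext fun v => h v v.2⟩

lemma mem_range_dualPairOn_of_continuous {φ : Module.Dual 𝔽₂ V} (hφ : Continuous φ) :
    φ ∈ LinearMap.range (dualPairOn V) := by
  -- `φ` vanishes where finitely many coordinate evaluations do, so it lies in their span.
  obtain ⟨I, hI, hφI⟩ := exists_finite_forall_eq_of_continuous hφ 0
  have := hI.to_subtype
  let L : I × Fin r → Module.Dual 𝔽₂ V := fun p =>
    dualPairOn V (Pi.single p.2 (MonoidAlgebra.single (p.1 : Γ) 1))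
  have hker : ⨅ p, LinearMap.ker (L p) ≤ LinearMap.ker φ := fun v hv => by
    simp only [Submodule.mem_iInf, LinearMap.mem_ker, L, dualPairOn_apply, dualPair_single_single,
      one_mul] at hv
    rw [LinearMap.mem_ker, hφI v fun γ hγ => funext fun i => hv ⟨⟨γ, hγ⟩, i⟩, map_zero]
  refine Submodule.span_le.2 ?_ (mem_span_of_iInf_ker_le_ker hker)
  rintro _ ⟨p, rfl⟩
  exact LinearMap.mem_range_self _ _

lemma mem_range_dualPairOn_iff {φ : Module.Dual 𝔽₂ V} :
    φ ∈ LinearMap.range (dualPairOn V) ↔ Continuous φ := by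
  refine ⟨?_, mem_range_dualPairOn_of_continuous⟩
  rintro ⟨χ, rfl⟩
  exact (continuous_dualPair χ).comp continuous_subtype_val

end Continuity

section Annihilator

variable {Γ : Type*} [Group Γ] {r : ℕ}

noncomputable def perpSubmodule (N : Submodule 𝔽₂[Γ] (Fin r → 𝔽₂[Γ])) :
    Submodule 𝔽₂ (Γ → Fin r → 𝔽₂) :=
  (N.restrictScalars 𝔽₂).dualAnnihilator.comap dualPairₗ.flip

lemma mem_perpSubmodule {N : Submodule 𝔽₂[Γ] (Fin r → 𝔽₂[Γ])} {f : Γ → Fin r → 𝔽₂} :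
    f ∈ perpSubmodule N ↔ ∀ χ ∈ N, dualPair χ f = 0 :=
  Submodule.mem_dualAnnihilator _

lemma isClosed_perpSubmodule (N : Submodule 𝔽₂[Γ] (Fin r → 𝔽₂[Γ])) :
    IsClosed (perpSubmodule N : Set (Γ → Fin r → 𝔽₂)) := by
  have : (perpSubmodule N : Set (Γ → Fin r → 𝔽₂)) = ⋂ χ ∈ N, {f | dualPair χ f = 0} := by
    ext
    simp [mem_perpSubmodule]
  rw [this]
  exact isClosed_biInter fun χ _ => isClosed_eq (continuous_dualPair χ) continuous_const

lemma invariantSub_perpSubmodule (N : Submodule 𝔽₂[Γ] (Fin r → 𝔽₂[Γ])) :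
    InvariantSub (Fin r → 𝔽₂) (perpSubmodule N) := fun γ f hf =>
  mem_perpSubmodule.2 fun χ hχ => by
    have := mem_perpSubmodule.1 hf _ (N.smul_mem (MonoidAlgebra.of 𝔽₂ Γ γ⁻¹) hχ)
    rwa [dualPair_of_smul, inv_inv] at this

lemma perpSet_perpSubmodule (N : Submodule 𝔽₂[Γ] (Fin r → 𝔽₂[Γ])) :
    perpSet (perpSubmodule N : Set (Γ → Fin r → 𝔽₂)) = N := by
  ext χ
  rw [SetLike.mem_coe, ← Submodule.restrictScalars_mem 𝔽₂,
    ← Subspace.forall_mem_dualAnnihilator_apply_eq_zero_iff]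
  refine ⟨fun h φ hφ => ?_, fun h f hf => h _ hf⟩
  obtain ⟨f, rfl⟩ := surjective_dualPairₗ_flip φ
  exact h f hφ

end Annihilator

section Conjugacy

variable {Γ : Type*} {r s : ℕ} {V : Submodule 𝔽₂ (Γ → Fin r → 𝔽₂)}
  {W : Submodule 𝔽₂ (Γ → Fin s → 𝔽₂)}

noncomputable def dualGraph (e : V ≃ₗ[𝔽₂] W) :
    Submodule 𝔽₂ ((Fin r → 𝔽₂[Γ]) × (Fin s → 𝔽₂[Γ])) :=
  LinearMap.eqLocus (e.dualMap.toLinearMap ∘ₗ dualPairOn W ∘ₗ LinearMap.snd 𝔽₂ _ _)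
    (dualPairOn V ∘ₗ LinearMap.fst 𝔽₂ _ _)

lemma mem_dualGraph {e : V ≃ₗ[𝔽₂] W} {p : (Fin r → 𝔽₂[Γ]) × (Fin s → 𝔽₂[Γ])} :
    p ∈ dualGraph e ↔ e.dualMap (dualPairOn W p.2) = dualPairOn V p.1 :=
  Iff.rfl

lemma of_smul_mem_dualGraph [Group Γ] {e : V ≃ₗ[𝔽₂] W} (hVi : InvariantSub (Fin r → 𝔽₂) V)
    (heq : ∀ γ : Γ, ∀ v : V,
      (↑(e ⟨ltv _ γ ↑v, hVi γ ↑v v.2⟩) : Γ → Fin s → 𝔽₂) = ltv _ γ ↑(e v))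
    (γ : Γ) {p : (Fin r → 𝔽₂[Γ]) × (Fin s → 𝔽₂[Γ])} (hp : p ∈ dualGraph e) :
    MonoidAlgebra.of 𝔽₂ Γ γ • p ∈ dualGraph e := by
  rw [mem_dualGraph] at hp ⊢
  ext v
  have := LinearMap.congr_fun hp ⟨ltv _ γ⁻¹ v, hVi γ⁻¹ v v.2⟩
  simp only [LinearEquiv.dualMap_apply, dualPairOn_apply, Prod.smul_snd, Prod.smul_fst,
    dualPair_of_smul] at this ⊢
  rw [← heq, this]

theorem nonempty_quotient_perpSet_linearEquiv [Group Γ] (hVi : InvariantSub (Fin r → 𝔽₂) V)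
    (e : V ≃ₗ[𝔽₂] W) (he : Continuous e) (hes : Continuous e.symm)
    (heq : ∀ γ : Γ, ∀ v : V,
      (↑(e ⟨ltv _ γ ↑v, hVi γ ↑v v.2⟩) : Γ → Fin s → 𝔽₂) = ltv _ γ ↑(e v))
    {N : Submodule 𝔽₂[Γ] (Fin r → 𝔽₂[Γ])} {N' : Submodule 𝔽₂[Γ] (Fin s → 𝔽₂[Γ])}
    (hN : (N : Set (Fin r → 𝔽₂[Γ])) = perpSet (V : Set (Γ → Fin r → 𝔽₂)))
    (hN' : (N' : Set (Fin s → 𝔽₂[Γ])) = perpSet (W : Set (Γ → Fin s → 𝔽₂))) :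
    Nonempty (((Fin r → 𝔽₂[Γ]) ⧸ N) ≃ₗ[𝔽₂[Γ]] ((Fin s → 𝔽₂[Γ]) ⧸ N')) := by
  refine Submodule.nonempty_quotient_linearEquiv_of_graph
    ((dualGraph e).toMonoidAlgebra fun γ _ => of_smul_mem_dualGraph hVi heq γ) ?_ ?_ ?_
  · intro χ
    obtain ⟨χ', hχ'⟩ :=
      mem_range_dualPairOn_of_continuous (φ := e.symm.dualMap (dualPairOn V χ))
        ((mem_range_dualPairOn_iff.1 (LinearMap.mem_range_self _ χ)).comp hes)
    refine ⟨χ', mem_dualGraph.2 ?_⟩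
    rw [hχ', ← LinearEquiv.dualMap_symm, LinearEquiv.apply_symm_apply]
  · intro χ'
    obtain ⟨χ, hχ⟩ := mem_range_dualPairOn_of_continuous (φ := e.dualMap (dualPairOn W χ'))
      ((mem_range_dualPairOn_iff.1 (LinearMap.mem_range_self _ χ')).comp he)
    exact ⟨χ, mem_dualGraph.2 hχ.symm⟩
  · intro χ χ' h
    rw [← SetLike.mem_coe, hN, ← SetLike.mem_coe, hN', ← dualPairOn_eq_zero_iff,
      ← dualPairOn_eq_zero_iff, ← mem_dualGraph.1 h, LinearEquiv.map_eq_zero_iff]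

end Conjugacy

/-- Pontryagin duality gives a one-to-one correspondence between linear
subshifts `V ⊆ (Γ → 𝔽₂)^r` and finitely generated left `𝔽₂[Γ]`-modules, via
`V ↦ (𝔽₂[Γ])^r / V^⊥`: the resulting module is finitely generated; isomorphic subshifts
give isomorphic modules; and every finitely generated left `𝔽₂[Γ]`-module arises. -/
theorem pontryagin_correspondence :
    -- (1) the module attached to a linear subshift is finitely generated
    (∀ (r : ℕ) (V : Submodule (ZMod 2) (G → Fin r → ZMod 2)),
      IsClosed (V : Set (G → Fin r → ZMod 2)) → InvariantSub (Fin r → ZMod 2) V →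
      ∀ N : Submodule (MonoidAlgebra (ZMod 2) G) (Fin r → MonoidAlgebra (ZMod 2) G),
        (N : Set (Fin r → MonoidAlgebra (ZMod 2) G)) = perpSet (V : Set (G → Fin r → ZMod 2)) →
        Module.Finite (MonoidAlgebra (ZMod 2) G)
          ((Fin r → MonoidAlgebra (ZMod 2) G) ⧸ N)) ∧
    -- (2) isomorphic subshifts give isomorphic modules
    (∀ (r s : ℕ) (V : Submodule (ZMod 2) (G → Fin r → ZMod 2))
        (W : Submodule (ZMod 2) (G → Fin s → ZMod 2)),
      IsClosed (V : Set (G → Fin r → ZMod 2)) →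
      ∀ hVi : InvariantSub (Fin r → ZMod 2) V,
      IsClosed (W : Set (G → Fin s → ZMod 2)) → InvariantSub (Fin s → ZMod 2) W →
      ∀ e : ↥V ≃ₗ[ZMod 2] ↥W, Continuous e → Continuous e.symm →
      (∀ γ : G, ∀ v : ↥V,
        (↑(e ⟨ltv _ γ ↑v, hVi γ ↑v v.2⟩) : G → Fin s → ZMod 2) = ltv _ γ ↑(e v)) →
      ∀ (N : Submodule (MonoidAlgebra (ZMod 2) G) (Fin r → MonoidAlgebra (ZMod 2) G))
        (N' : Submodule (MonoidAlgebra (ZMod 2) G) (Fin s → MonoidAlgebra (ZMod 2) G)),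
        (N : Set _) = perpSet (V : Set (G → Fin r → ZMod 2)) →
        (N' : Set _) = perpSet (W : Set (G → Fin s → ZMod 2)) →
        Nonempty
          (((Fin r → MonoidAlgebra (ZMod 2) G) ⧸ N) ≃ₗ[MonoidAlgebra (ZMod 2) G]
           ((Fin s → MonoidAlgebra (ZMod 2) G) ⧸ N'))) ∧
    -- (3) every finitely generated module arises from a linear subshift
    (∀ (M : Type) [AddCommGroup M] [Module (MonoidAlgebra (ZMod 2) G) M],
      Module.Finite (MonoidAlgebra (ZMod 2) G) M →
      ∃ (r : ℕ) (V : Submodule (ZMod 2) (G → Fin r → ZMod 2))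
        (N : Submodule (MonoidAlgebra (ZMod 2) G) (Fin r → MonoidAlgebra (ZMod 2) G)),
        IsClosed (V : Set (G → Fin r → ZMod 2)) ∧ InvariantSub (Fin r → ZMod 2) V ∧
        (N : Set _) = perpSet (V : Set (G → Fin r → ZMod 2)) ∧
        Nonempty (M ≃ₗ[MonoidAlgebra (ZMod 2) G]
          ((Fin r → MonoidAlgebra (ZMod 2) G) ⧸ N))) := by
  refine ⟨fun r V _ _ N _ => Module.Finite.of_surjective N.mkQ N.mkQ_surjective, ?_, ?_⟩
  · intro r s V W _ hVi _ _ e he hes heq N N' hN hN'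
    exact nonempty_quotient_perpSet_linearEquiv hVi e he hes heq hN hN'
  · intro M _ _ _
    obtain ⟨n, π, hπ⟩ := Module.Finite.exists_fin' (MonoidAlgebra (ZMod 2) G) M
    exact ⟨n, perpSubmodule (LinearMap.ker π), LinearMap.ker π, isClosed_perpSubmodule _,
      invariantSub_perpSubmodule _, (perpSet_perpSubmodule _).symm,
      ⟨(π.quotKerEquivOfSurjective hπ).symm⟩⟩
end

section
/- Let V ⊆ (Γ → 𝔽₂)^r be a linear subshift and V⁰ its subspace of finitely supported elements. If V⁰ ≠ 0 then h_Γ(V⁰) > 0. -/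
open Filter Topology Pointwise

variable {G : Type*} [Group G] [DecidableEq G]

/-- The subspace of finitely supported functions in `(Γ → M)`. -/
def finSuppSub (M : Type*) [AddCommGroup M] [Module (ZMod 2) M] :
    Submodule (ZMod 2) (G → M) where
  carrier := {f | (Function.support f).Finite}
  add_mem' := fun hf hg => Set.Finite.subset (hf.union hg) (Function.support_add _ _)
  zero_mem' := by simp [Function.support_zero]
  smul_mem' := fun c f hf => Set.Finite.subset hf (by
    intro x hx
    simp only [Function.mem_support] at hx ⊢
    intro h0
    exact hx (by simp [Pi.smul_apply, h0]))

/-!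
Translate a nonzero `f ∈ V⁰` so that `f 1 ≠ 0`; its support is a finite set `K ∋ 1`. In a
finite `Λ ⊆ Γ` take a maximal `D ⊆ Λ` with `x⁻¹ * y ∉ K` for distinct `x, y ∈ D`. Maximality
gives `Λ ⊆ D * (K ∪ K⁻¹)`, so `|D| ≥ |Λ| / |K ∪ K⁻¹|`, and the translates `x • f` (`x ∈ D`)
restricted to `Λ` are linearly independent because their values on `D` form a diagonal family.
Thus `dim V⁰_Λ ≥ |Λ| / |K ∪ K⁻¹|` for every `Λ`, which bounds the entropy from below.
-/

section

variable {Γ : Type*} {M : Type*} [AddCommGroup M] [Module (ZMod 2) M] [Module.Finite (ZMod 2) M]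

lemma finrank_resSpace_le (W : Submodule (ZMod 2) (Γ → M)) (Λ : Finset Γ) :
    Module.finrank (ZMod 2) (resSpace W Λ) ≤ Λ.card * Module.finrank (ZMod 2) M :=
  (Submodule.finrank_le _).trans (by simp [Module.finrank_pi_fintype])

lemma le_entropy_of_forall_le (F : ℕ → Finset Γ) (W : Submodule (ZMod 2) (Γ → M)) {c : ℝ}
    (hc : ∀ n, c ≤ Module.finrank (ZMod 2) (resSpace W (F n)) / (F n).card) :
    c ≤ entropy F W :=
  le_limsup_of_frequently_le (Frequently.of_forall hc) <|
    isBoundedUnder_of ⟨Module.finrank (ZMod 2) M, fun n =>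
      div_le_of_le_mul₀ (Nat.cast_nonneg _) (Nat.cast_nonneg _) <| by
        exact_mod_cast (finrank_resSpace_le W (F n)).trans_eq (mul_comm _ _)⟩

end

section

variable {Γ : Type*} [Group Γ]

lemma FolnerSeq.nonempty [DecidableEq Γ] {S : Finset Γ} {F : ℕ → Finset Γ}
    (hF : FolnerSeq S F) (n : ℕ) : (F n).Nonempty :=
  ⟨1, hF.mono n.zero_le hF.one_mem⟩

@[simp]
lemma ltv_apply {M : Type*} (γ : Γ) (f : Γ → M) (δ : Γ) : ltv M γ f δ = f (γ⁻¹ * δ) := rfl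

lemma Finset.exists_subset_pairwise_subset_mul [DecidableEq Γ] (A K : Finset Γ)
    (hK : (1 : Γ) ∈ K) :
    ∃ D ⊆ A, (D : Set Γ).Pairwise (fun x y => x⁻¹ * y ∉ K) ∧ A ⊆ D * (K ∪ K⁻¹) := by
  obtain ⟨D, hD⟩ := (A.powerset.filter fun D : Finset Γ =>
    (D : Set Γ).Pairwise (fun x y => x⁻¹ * y ∉ K)).exists_maximal ⟨∅, by simp⟩
  obtain ⟨hDA, hDsep⟩ : D ⊆ A ∧ (D : Set Γ).Pairwise (fun x y => x⁻¹ * y ∉ K) := by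
    simpa using hD.1
  refine ⟨D, hDA, hDsep, fun a ha => ?_⟩
  by_cases haD : a ∈ D
  · exact Finset.mem_mul.mpr ⟨a, haD, 1, by simp [hK], mul_one a⟩
  have hnsep : ¬ ((insert a D : Finset Γ) : Set Γ).Pairwise (fun x y => x⁻¹ * y ∉ K) :=
    fun hsep => haD (hD.2 (by simpa [Finset.insert_subset_iff, ha, hDA] using hsep)
      (Finset.subset_insert a D) (Finset.mem_insert_self a D))
  rw [Finset.coe_insert, Set.pairwise_insert] at hnsep
  push Not at hnsep
  obtain ⟨b, hbD, -, hab⟩ := hnsep hDsep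
  refine Finset.mem_mul.mpr ⟨b, hbD, b⁻¹ * a, ?_, mul_inv_cancel_left b a⟩
  by_cases hba : b⁻¹ * a ∈ K
  · exact Finset.mem_union_left _ hba
  · exact Finset.mem_union_right _ (by simpa using not_not.mp (mt hab hba))

variable {M : Type*} [AddCommGroup M] [Module (ZMod 2) M]

lemma InvariantSub.inf_finSuppSub {V : Submodule (ZMod 2) (Γ → M)} (hV : InvariantSub M V) :
    InvariantSub M (V ⊓ finSuppSub M) := fun γ f ⟨hfV, hfin⟩ =>
  ⟨hV γ f hfV, by
    change (Function.support (f ∘ (γ⁻¹ * ·))).Finite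
    rw [Function.support_comp_eq_preimage]
    exact hfin.preimage (mul_right_injective γ⁻¹).injOn⟩

lemma InvariantSub.exists_mem_apply_one_ne_zero {W : Submodule (ZMod 2) (Γ → M)}
    (hW : InvariantSub M W) (hne : W ≠ ⊥) : ∃ f ∈ W, f 1 ≠ 0 := by
  obtain ⟨f, hfW, hf0⟩ := (Submodule.ne_bot_iff W).mp hne
  obtain ⟨g, hg⟩ := Function.ne_iff.mp hf0
  exact ⟨ltv M g⁻¹ f, hW g⁻¹ f hfW, by simpa using hg⟩

lemma linearIndependent_restrict_ltv {f : Γ → M} (hf1 : f 1 ≠ 0) {K : Finset Γ}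
    (hfK : Function.support f ⊆ K) {Λ D : Finset Γ} (hDΛ : D ⊆ Λ)
    (hD : (D : Set Γ).Pairwise (fun x y => x⁻¹ * y ∉ K)) :
    LinearIndependent (ZMod 2)
      (fun x : D => LinearMap.funLeft (ZMod 2) M (Subtype.val : Λ → Γ) (ltv M x f)) := by
  classical
  let restrictToD : (Λ → M) →ₗ[ZMod 2] (D → M) :=
    LinearMap.funLeft (ZMod 2) M (fun x : D => (⟨x, hDΛ x.2⟩ : Λ))
  refine LinearIndependent.of_comp restrictToD ?_
  have hdiag : restrictToD ∘ (fun x : D =>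
      LinearMap.funLeft (ZMod 2) M (Subtype.val : Λ → Γ) (ltv M x f)) =
      fun x => Pi.single x (f 1) := by
    ext x y
    by_cases hxy : y = x
    · subst hxy; simp [restrictToD]
    · have hsep : (x : Γ)⁻¹ * y ∉ K := hD x.2 y.2 (fun h => hxy (Subtype.ext h).symm)
      simpa [restrictToD, Pi.single_apply, hxy] using fun h => hsep (hfK h)
  rw [hdiag]
  exact Pi.linearIndependent_single_of_ne_zero fun _ => hf1

lemma card_le_finrank_resSpace_mul [DecidableEq Γ] [Module.Finite (ZMod 2) M]
    {W : Submodule (ZMod 2) (Γ → M)} (hW : InvariantSub M W) {f : Γ → M} (hfW : f ∈ W)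
    (hf1 : f 1 ≠ 0) {K : Finset Γ} (hfK : Function.support f ⊆ K) (Λ : Finset Γ) :
    Λ.card ≤ Module.finrank (ZMod 2) (resSpace W Λ) * (K ∪ K⁻¹).card := by
  obtain ⟨D, hDΛ, hD, hcover⟩ := Λ.exists_subset_pairwise_subset_mul K (hfK hf1)
  have hspan : Submodule.span (ZMod 2) (Set.range fun x : D =>
      LinearMap.funLeft (ZMod 2) M (Subtype.val : Λ → Γ) (ltv M x f)) ≤ resSpace W Λ :=
    Submodule.span_le.mpr (Set.range_subset_iff.mpr fun x => ⟨_, hW x f hfW, rfl⟩)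
  calc Λ.card ≤ (D * (K ∪ K⁻¹)).card := Finset.card_le_card hcover
    _ ≤ D.card * (K ∪ K⁻¹).card := Finset.card_mul_le
    _ ≤ Module.finrank (ZMod 2) (resSpace W Λ) * (K ∪ K⁻¹).card := by
      rw [← Fintype.card_coe D,
        ← finrank_span_eq_card (linearIndependent_restrict_ltv hf1 hfK hDΛ hD)]
      exact Nat.mul_le_mul_right _ (Submodule.finrank_mono hspan)

end

theorem entropy_pos_of_finitely_supported_general (r : ℕ)
    (S : Finset G) (F : ℕ → Finset G) (hF : FolnerSeq S F)
    (V : Submodule (ZMod 2) (G → Fin r → ZMod 2))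
    (hVi : InvariantSub (Fin r → ZMod 2) V)
    (hne : V ⊓ finSuppSub (Fin r → ZMod 2) ≠ ⊥) :
    0 < entropy F (V ⊓ finSuppSub (Fin r → ZMod 2)) := by
  have hWi := hVi.inf_finSuppSub
  obtain ⟨f, hfW, hf1⟩ := hWi.exists_mem_apply_one_ne_zero hne
  set K := hfW.2.toFinset
  have hKpos : 0 < (K ∪ K⁻¹).card :=
    Finset.card_pos.mpr ⟨1, Finset.mem_union_left _ (hfW.2.mem_toFinset.mpr hf1)⟩
  refine (one_div_pos.mpr (Nat.cast_pos.mpr hKpos)).trans_le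
    (le_entropy_of_forall_le F _ fun n => ?_)
  rw [div_le_div_iff₀ (Nat.cast_pos.mpr hKpos) (Nat.cast_pos.mpr (hF.nonempty n).card_pos),
    one_mul]
  exact_mod_cast card_le_finrank_resSpace_mul hWi hfW hf1 hfW.2.coe_toFinset.symm.subset (F n)

/-- If the subspace `V⁰` of finitely supported elements of a linear
subshift `V ⊆ (Γ → 𝔽₂)^r` is nonzero, then `h_Γ(V⁰) > 0`. -/
theorem entropy_pos_of_finitely_supported (r : ℕ)
    (S : Finset G) (F : ℕ → Finset G) (hS : SymmGen S) (hF : FolnerSeq S F)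
    (V : Submodule (ZMod 2) (G → Fin r → ZMod 2))
    (hVc : IsClosed (V : Set (G → Fin r → ZMod 2)))
    (hVi : InvariantSub (Fin r → ZMod 2) V)
    (hne : V ⊓ finSuppSub (Fin r → ZMod 2) ≠ ⊥) :
    0 < entropy F (V ⊓ finSuppSub (Fin r → ZMod 2)) :=
  entropy_pos_of_finitely_supported_general r S F hF V hVi hne
end

section
/- If Γ is a finitely generated amenable group with 𝔽₂[Γ] left Noetherian, then every linear subshift V ⊆ (Γ → 𝔽₂)^r is of finite type: there exists D such that every ξ ∈ (Γ → 𝔽₂)^r whose restriction to every ball B_D(γ) (γ ∈ Γ) agrees with the restriction of some element of V on that ball, belongs to V. In particular V is expansive. -/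
open Filter Topology Pointwise

variable {G : Type*} [Group G] [DecidableEq G]

set_option linter.unusedSectionVars false

variable {r : ℕ}

omit [DecidableEq G] in
lemma ltv_ltv (M : Type*) (g h : G) (f : G → M) : ltv M g (ltv M h f) = ltv M (g * h) f := by
  funext δ; simp [ltv, mul_assoc]

omit [DecidableEq G] in
lemma ltv_one (M : Type*) (f : G → M) : ltv M 1 f = f := by funext δ; simp [ltv]

/-- The pairing of a configuration with an element of `𝔽₂[Γ]^r`, as a linear map. -/
noncomputable def Bp (r : ℕ) (ξ : G → Fin r → ZMod 2) :
    (Fin r → MonoidAlgebra (ZMod 2) G) →ₗ[ZMod 2] ZMod 2 :=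
  ∑ i, ((Finsupp.linearCombination (ZMod 2) fun γ => ξ γ i).comp
    (MonoidAlgebra.coeffLinearEquiv (ZMod 2)).toLinearMap).comp (LinearMap.proj i)

lemma Bp_apply (ξ : G → Fin r → ZMod 2) (a : Fin r → MonoidAlgebra (ZMod 2) G) :
    Bp r ξ a = ∑ i, Finsupp.linearCombination (ZMod 2) (fun γ => ξ γ i) (a i).coeff := by
  simp only [Bp, LinearMap.sum_apply, LinearMap.comp_apply]
  rfl

lemma Bp_single_smul (ξ : G → Fin r → ZMod 2) (g : G) (c : ZMod 2)
    (a : Fin r → MonoidAlgebra (ZMod 2) G) :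
    Bp r ξ (MonoidAlgebra.single g c • a) = c * Bp r (ltv _ g⁻¹ ξ) a := by
  rw [Bp_apply, Bp_apply, Finset.mul_sum]
  refine Finset.sum_congr rfl fun i _ => ?_
  have h1 : (MonoidAlgebra.single g c • a) i = MonoidAlgebra.single g c * a i := rfl
  rw [h1]
  induction (a i) using MonoidAlgebra.induction_linear with
  | zero => simp
  | add f₁ f₂ h1 h2 => rw [mul_add, MonoidAlgebra.coeff_add, map_add, MonoidAlgebra.coeff_add, map_add, h1, h2, mul_add]
  | single γ d =>
      rw [MonoidAlgebra.single_mul_single, MonoidAlgebra.coeff_single, MonoidAlgebra.coeff_single, Finsupp.linearCombination_single,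
        Finsupp.linearCombination_single, smul_eq_mul, smul_eq_mul]
      simp only [ltv, inv_inv]
      ring

lemma smul_decomp (p : MonoidAlgebra (ZMod 2) G) (a : Fin r → MonoidAlgebra (ZMod 2) G) :
    p • a = ∑ g ∈ p.coeff.support, MonoidAlgebra.single g (p.coeff g) • a := by
  rw [← Finset.sum_smul]
  congr 1
  conv_lhs => rw [← MonoidAlgebra.sum_coeff_single p]
  rfl

lemma Bp_smul (ξ : G → Fin r → ZMod 2) (p : MonoidAlgebra (ZMod 2) G)
    (a : Fin r → MonoidAlgebra (ZMod 2) G) :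
    Bp r ξ (p • a) = ∑ g ∈ p.coeff.support, p.coeff g * Bp r (ltv _ g⁻¹ ξ) a := by
  rw [smul_decomp, map_sum]
  exact Finset.sum_congr rfl fun g _ => Bp_single_smul ξ g (p.coeff g) a

/-- The annihilator of `V` inside `𝔽₂[Γ]^r`, as a module over the group algebra. -/
noncomputable def perpSub (r : ℕ) (V : Submodule (ZMod 2) (G → Fin r → ZMod 2))
    (hVi : InvariantSub (Fin r → ZMod 2) V) :
    Submodule (MonoidAlgebra (ZMod 2) G) (Fin r → MonoidAlgebra (ZMod 2) G) where
  carrier := {a | ∀ v ∈ V, Bp r v a = 0}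
  add_mem' := fun {a} {b} ha hb v hv => by rw [map_add, ha v hv, hb v hv, add_zero]
  zero_mem' := fun v hv => by rw [map_zero]
  smul_mem' := fun p {a} ha v hv => by
    rw [Bp_smul]
    exact Finset.sum_eq_zero fun g _ => by rw [ha _ (hVi g⁻¹ v hv), mul_zero]

/-- The "translates of ξ annihilate" submodule. -/
noncomputable def zSub (r : ℕ) (ξ : G → Fin r → ZMod 2) :
    Submodule (MonoidAlgebra (ZMod 2) G) (Fin r → MonoidAlgebra (ZMod 2) G) where
  carrier := {a | ∀ g : G, Bp r (ltv _ g ξ) a = 0}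
  add_mem' := fun {a} {b} ha hb g => by rw [map_add, ha g, hb g, add_zero]
  zero_mem' := fun g => by rw [map_zero]
  smul_mem' := fun p {a} ha g => by
    rw [Bp_smul]
    refine Finset.sum_eq_zero fun g' _ => ?_
    rw [ltv_ltv, ha (g'⁻¹ * g), mul_zero]

/-- Duality: a configuration annihilated by `V^⊥` lies in the closed subspace `V`. -/
lemma mem_of_perp (V : Submodule (ZMod 2) (G → Fin r → ZMod 2))
    (hVc : IsClosed (V : Set (G → Fin r → ZMod 2)))
    (hVi : InvariantSub (Fin r → ZMod 2) V) (ξ : G → Fin r → ZMod 2)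
    (hp : ∀ a ∈ perpSub r V hVi, Bp r ξ a = 0) : ξ ∈ V := by
  classical
  have claim : ∀ Λ : Finset G, ∃ v ∈ V, ∀ x ∈ Λ, ξ x = v x := by
    intro Λ
    by_contra hcon
    push_neg at hcon
    set res : (G → Fin r → ZMod 2) →ₗ[ZMod 2] (↥Λ → Fin r → ZMod 2) :=
      LinearMap.funLeft (ZMod 2) _ (Subtype.val : ↥Λ → G) with hres
    set W : Submodule (ZMod 2) (↥Λ → Fin r → ZMod 2) := V.map res with hW
    have hξW : res ξ ∉ W := by
      rintro ⟨v, hv, hveq⟩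
      obtain ⟨x, hx, hne⟩ := hcon v hv
      exact hne (congrFun hveq ⟨x, hx⟩).symm
    have hmk : W.mkQ (res ξ) ≠ 0 := by
      rw [Submodule.mkQ_apply, ne_eq, Submodule.Quotient.mk_eq_zero]
      exact hξW
    have : ¬ ∀ φ0 : Module.Dual (ZMod 2) ((↥Λ → Fin r → ZMod 2) ⧸ W),
        φ0 (W.mkQ (res ξ)) = 0 := by
      rw [Module.forall_dual_apply_eq_zero_iff]
      exact hmk
    push_neg at this
    obtain ⟨φ0, hφ0⟩ := this
    set φ : (↥Λ → Fin r → ZMod 2) →ₗ[ZMod 2] ZMod 2 := φ0.comp W.mkQ with hφ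
    have hφW : ∀ w ∈ W, φ w = 0 := by
      intro w hw
      simp only [hφ, LinearMap.comp_apply, Submodule.mkQ_apply]
      rw [Submodule.Quotient.mk_eq_zero _ |>.mpr hw, map_zero]
    set a : Fin r → MonoidAlgebra (ZMod 2) G := fun i =>
      ∑ x : ↥Λ, MonoidAlgebra.single (x : G) (φ (Pi.single x (Pi.single i 1))) with ha
    have key : ∀ η : G → Fin r → ZMod 2, Bp r η a = φ (res η) := by
      intro η
      have hresη : res η = ∑ x : ↥Λ, Pi.single x (η ↑x) :=
        (Finset.univ_sum_single (res η)).symm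
      rw [hresη, map_sum]
      have hsingle : ∀ x : ↥Λ, φ (Pi.single x (η ↑x)) =
          ∑ i, η ↑x i * φ (Pi.single x (Pi.single i 1)) := by
        intro x
        have hdec : η (↑x) = ∑ i, η ↑x i • Pi.single i (1 : ZMod 2) := by
          funext j
          rw [Finset.sum_apply]
          simp [Pi.single_apply, eq_comm]
        set ψ : (Fin r → ZMod 2) →ₗ[ZMod 2] ZMod 2 :=
          φ.comp (LinearMap.single (ZMod 2) (fun _ : ↥Λ => Fin r → ZMod 2) x) with hψ
        show ψ (η ↑x) = ∑ i, η ↑x i * ψ (Pi.single i 1)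
        conv_lhs => rw [hdec]
        rw [map_sum]
        exact Finset.sum_congr rfl fun i _ => by rw [map_smul, smul_eq_mul]
      rw [Bp_apply]
      simp only [ha, MonoidAlgebra.coeff_sum, MonoidAlgebra.coeff_single, map_sum, Finsupp.linearCombination_single, smul_eq_mul, hsingle]
      rw [Finset.sum_comm]
      exact Finset.sum_congr rfl fun x _ => Finset.sum_congr rfl fun i _ => mul_comm _ _
    have haperp : a ∈ perpSub r V hVi := by
      intro v hv
      rw [key v]
      exact hφW (res v) ⟨v, hv, rfl⟩
    have := hp a haperp
    rw [key ξ] at this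
    exact hφ0 this
  by_contra hξ
  have hopen : IsOpen ((V : Set (G → Fin r → ZMod 2))ᶜ) := hVc.isOpen_compl
  obtain ⟨I, u, hIu, hsub⟩ := isOpen_pi_iff.mp hopen ξ hξ
  obtain ⟨v, hv, hveq⟩ := claim I
  have : v ∈ (I : Set G).pi u := fun x hx => (hveq x hx) ▸ (hIu x hx).2
  exact (hsub this) hv

lemma list_prod_mem_pow (S : Finset G) :
    ∀ l : List G, (∀ x ∈ l, x ∈ S) → l.prod ∈ S ^ l.length := by
  intro l
  induction l with
  | nil => intro _; simp [Finset.mem_one]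
  | cons x l ih =>
      intro h
      rw [List.prod_cons, List.length_cons, pow_succ']
      exact Finset.mul_mem_mul (h x List.mem_cons_self) (ih fun y hy => h y (List.mem_cons_of_mem x hy))

lemma exists_pow_mem {S : Finset G} (hS : SymmGen S) (g : G) : ∃ n, g ∈ S ^ n := by
  have h1 : g ∈ Submonoid.closure (S : Set G) := by
    have h2 : ((S : Set G) ∪ (S : Set G)⁻¹) = (S : Set G) := by
      apply Set.union_eq_self_of_subset_right
      intro x hx
      rw [Set.mem_inv] at hx
      simpa using hS.2.1 _ hx
    have h3 := Subgroup.closure_toSubmonoid (S : Set G)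
    have h4 : g ∈ (Subgroup.closure (S : Set G)).toSubmonoid := by
      rw [hS.2.2]; trivial
    rw [h3, h2] at h4
    exact h4
  obtain ⟨l, hl, hprod⟩ := Submonoid.exists_list_of_mem_closure h1
  exact ⟨l.length, hprod ▸ list_prod_mem_pow S l hl⟩

lemma pow_mono_set {S : Finset G} (h1 : (1 : G) ∈ S) {m n : ℕ} (h : m ≤ n) : S ^ m ⊆ S ^ n := by
  induction n with
  | zero => rw [Nat.le_zero.mp h]
  | succ n ih =>
      rcases Nat.lt_or_ge m (n+1) with hlt | hge
      · refine (ih (Nat.lt_succ_iff.mp hlt)).trans ?_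
        intro x hx
        rw [pow_succ]
        simpa using Finset.mul_mem_mul hx h1
      · rw [Nat.le_antisymm h hge]


/-- If `𝔽₂[Γ]` is left Noetherian, every linear subshift
`V ⊆ (Γ → 𝔽₂)^r` is of finite type: there is a `D` such that any configuration whose
restriction to every ball `B_D(γ) = γ • S^D` agrees with some element of `V` lies in
`V`. In particular `V` is expansive. -/
theorem subshift_finite_type (r : ℕ)
    (S : Finset G) (F : ℕ → Finset G) (hS : SymmGen S) (hF : FolnerSeq S F)
    (hNoeth : IsNoetherianRing (MonoidAlgebra (ZMod 2) G))
    (V : Submodule (ZMod 2) (G → Fin r → ZMod 2))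
    (hVc : IsClosed (V : Set (G → Fin r → ZMod 2)))
    (hVi : InvariantSub (Fin r → ZMod 2) V) :
    ∃ D : ℕ,
      (∀ ξ : G → Fin r → ZMod 2,
        (∀ γ : G, ∃ v ∈ V, ∀ x ∈ γ • (S ^ D), ξ x = v x) → ξ ∈ V) ∧
      -- expansiveness: the coordinates in a fixed finite window, moved by the action,
      -- separate the points of `V`
      (∃ Λ : Finset G, ∀ x ∈ V, ∀ y ∈ V, x ≠ y →
        ∃ γ : G, ∃ p ∈ Λ, ltv (Fin r → ZMod 2) γ x p ≠ ltv (Fin r → ZMod 2) γ y p) := by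
  classical
  haveI := hNoeth
  obtain ⟨T, hT⟩ := IsNoetherian.noetherian (perpSub r V hVi)
  set Λ0 : Finset G := T.sup (fun a => Finset.univ.sup fun i => (a i).coeff.support) with hΛ0
  set D : ℕ := Λ0.sup (fun g => Nat.find (exists_pow_mem hS g)) with hD
  have hsupp : ∀ a ∈ T, ∀ i : Fin r, (a i).coeff.support ⊆ S ^ D := by
    intro a ha i g hg
    have hgΛ : g ∈ Λ0 := by
      have h1 : (a i).coeff.support ≤ Finset.univ.sup fun j => (a j).coeff.support :=
        Finset.le_sup (f := fun j => (a j).coeff.support) (Finset.mem_univ i)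
      have h2 : (Finset.univ.sup fun j => (a j).coeff.support) ≤ Λ0 :=
        Finset.le_sup (f := fun a => Finset.univ.sup fun i => (a i).coeff.support) ha
      exact h2 (h1 hg)
    have h1 : g ∈ S ^ Nat.find (exists_pow_mem hS g) := Nat.find_spec (exists_pow_mem hS g)
    exact pow_mono_set hS.1 (Finset.le_sup (f := fun g => Nat.find (exists_pow_mem hS g)) hgΛ) h1
  refine ⟨D, ?_, ?_⟩
  · intro ξ H
    apply mem_of_perp V hVc hVi
    have hTZ : ∀ a ∈ T, a ∈ zSub r ξ := by
      intro a ha g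
      obtain ⟨v, hv, hvg⟩ := H g⁻¹
      have haperp : a ∈ perpSub r V hVi := by
        rw [← hT]; exact Submodule.subset_span ha
      have heq : Bp r (ltv _ g ξ) a = Bp r (ltv _ g v) a := by
        rw [Bp_apply, Bp_apply]
        refine Finset.sum_congr rfl fun i _ => ?_
        rw [Finsupp.linearCombination_apply, Finsupp.linearCombination_apply]
        refine Finsupp.sum_congr fun γ hγ => ?_
        have hγS : γ ∈ S ^ D := hsupp a ha i hγ
        have hmem : g⁻¹ * γ ∈ g⁻¹ • (S ^ D) := by
          simpa [smul_eq_mul] using Finset.smul_mem_smul_finset (a := g⁻¹) hγS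
        have hx := hvg _ hmem
        simp only [ltv]
        rw [hx]
      rw [heq]
      exact haperp _ (hVi g v hv)
    have hle : perpSub r V hVi ≤ zSub r ξ := by
      rw [← hT]
      exact Submodule.span_le.mpr fun a ha => hTZ a ha
    intro a ha
    have h1 := hle ha 1
    rwa [ltv_one] at h1
  · refine ⟨{1}, fun x hx y hy hxy => ?_⟩
    have hex : ∃ δ, x δ ≠ y δ := by
      by_contra h; push_neg at h; exact hxy (funext h)
    obtain ⟨δ, hδ⟩ := hex
    exact ⟨δ⁻¹, 1, Finset.mem_singleton_self 1, by simpa [ltv] using hδ⟩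
end

section
/- If K̃ is contractible (so all 𝔽₂-cohomology of K̃ in positive degrees vanishes and H⁰(K̃,𝔽₂) = 𝔽₂), then all entropy Betti numbers b_E^p(K) vanish. Consequently, a finite acyclic simplicial complex with infinite amenable fundamental group has Euler characteristic zero. -/
/-!
Exactness gives `b_E^{q+1} = h(Ker d_{q+1}) - h(Im d_q) = 0`, and `Ker d_0` is finite, so it has
entropy zero.

For the Euler characteristic `χ = ∑ (-1)^p k_p`, continuity and equivariance make every `d_p`
local: `(d_p f)(g)` only depends on `f` on `g * S^r`. Compressing `d_p` to a finite window `Λ`,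
rank–nullity gives `dim Ker d_p|_Λ + dim Im d_p|_Λ = k_p |Λ|` up to an error proportional to the
`S^r`-boundary of `Λ`. By exactness the alternating sum telescopes to
`|Λ| χ ≈ dim Ker d_0|_Λ ≤ 1`; on the Følner sets, dividing by `|Λ| → ∞` forces `χ = 0`.
-/

open Filter Topology Pointwise

variable {G : Type*} [Group G] [DecidableEq G]

variable (F : ℕ → Finset G)

/-- The `p`-th entropy Betti number of an equivariant cochain complex
`(Γ → 𝔽₂)^{k 0} → (Γ → 𝔽₂)^{k 1} → …`:
`b_E^p = h_Γ(Ker d_p) − h_Γ(Im d_{p−1})` (with `Im d_{−1} = 0`). -/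
noncomputable def bE
    (k : ℕ → ℕ)
    (d : ∀ p : ℕ, (G → Fin (k p) → ZMod 2) →ₗ[ZMod 2] (G → Fin (k (p + 1)) → ZMod 2))
    (p : ℕ) : ℝ :=
  entropy F (LinearMap.ker (d p)) -
    (match p with
     | 0 => 0
     | q + 1 => entropy F (LinearMap.range (d q)))

open Finset

section ExtendByZero

noncomputable def extendByZero {ι : Type*} (R : Type*) {M : Type*} [DecidableEq ι] [Semiring R]
    [AddCommMonoid M] [Module R M] (Λ : Finset ι) : (Λ → M) →ₗ[R] (ι → M) where
  toFun h i := if hi : i ∈ Λ then h ⟨i, hi⟩ else 0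
  map_add' h₁ h₂ := by funext i; by_cases hi : i ∈ Λ <;> simp [hi]
  map_smul' c h := by funext i; by_cases hi : i ∈ Λ <;> simp [hi]

variable {ι R M : Type*} [DecidableEq ι] [Semiring R] [AddCommMonoid M] [Module R M]
  {Λ : Finset ι}

theorem extendByZero_apply_of_mem (h : Λ → M) {i : ι} (hi : i ∈ Λ) :
    extendByZero R Λ h i = h ⟨i, hi⟩ :=
  dif_pos hi

theorem extendByZero_apply_of_notMem (h : Λ → M) {i : ι} (hi : i ∉ Λ) :
    extendByZero R Λ h i = 0 :=
  dif_neg hi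

@[simp]
theorem funLeft_extendByZero (h : Λ → M) :
    LinearMap.funLeft R M (Subtype.val : Λ → ι) (extendByZero R Λ h) = h :=
  funext fun i => extendByZero_apply_of_mem (R := R) h i.2

end ExtendByZero

theorem Submodule.finrank_le_finrank_map_add {K V U U' : Type*} [Field K] [AddCommGroup V]
    [Module K V] [AddCommGroup U] [Module K U] [AddCommGroup U'] [Module K U']
    [FiniteDimensional K V] [FiniteDimensional K U'] (ρ : V →ₗ[K] U) (σ : V →ₗ[K] U')
    (h : ∀ x, ρ x = 0 → σ x = 0 → x = 0) (p : Submodule K V) :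
    Module.finrank K p ≤ Module.finrank K (p.map ρ) + Module.finrank K U' := by
  rw [← Module.finrank_prod]
  refine LinearMap.finrank_le_finrank_of_injective
    (f := (ρ.submoduleMap p).prod (σ ∘ₗ p.subtype)) ((injective_iff_map_eq_zero _).2 ?_)
  intro x hx
  obtain ⟨hρ, hσ⟩ := Prod.ext_iff.1 hx
  exact Subtype.ext (h x (congrArg Subtype.val hρ) hσ)

theorem finrank_finset_fun {ι K M : Type*} [Field K] [AddCommGroup M] [Module K M]
    [Module.Finite K M] (Λ : Finset ι) :
    Module.finrank K (Λ → M) = #Λ * Module.finrank K M := by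
  simp [Module.finrank_pi_fintype]

section ResSpace

variable {Γ M : Type*} [AddCommGroup M] [Module (ZMod 2) M]

theorem resSpace_eq_map_of_subset (W : Submodule (ZMod 2) (Γ → M)) {Λ Λ' : Finset Γ}
    (h : Λ ⊆ Λ') :
    resSpace W Λ =
      (resSpace W Λ').map (LinearMap.funLeft (ZMod 2) M fun x : Λ => (⟨x.1, h x.2⟩ : Λ')) := by
  rw [resSpace, resSpace, ← Submodule.map_comp, ← LinearMap.funLeft_comp]
  rfl

theorem finrank_resSpace_le_of_subset [DecidableEq Γ] [Module.Finite (ZMod 2) M]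
    (W : Submodule (ZMod 2) (Γ → M)) {Λ Λ' : Finset Γ} (h : Λ ⊆ Λ') :
    Module.finrank (ZMod 2) (resSpace W Λ') ≤
      Module.finrank (ZMod 2) (resSpace W Λ) + #(Λ' \ Λ) * Module.finrank (ZMod 2) M := by
  rw [resSpace_eq_map_of_subset W h, ← finrank_finset_fun]
  refine Submodule.finrank_le_finrank_map_add _
    (LinearMap.funLeft (ZMod 2) M fun x : ↥(Λ' \ Λ) => (⟨x.1, sdiff_subset x.2⟩ : Λ')) ?_ _
  intro x hΛ hΛ'
  funext i
  by_cases hi : i.1 ∈ Λ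
  · exact congrFun hΛ ⟨i.1, hi⟩
  · exact congrFun hΛ' ⟨i.1, mem_sdiff.2 ⟨i.2, hi⟩⟩

end ResSpace

section Locality

variable {Γ M N : Type*} [Group Γ]

def IsLocal [Zero M] [Zero N] (d : (Γ → M) → Γ → N) (T : Finset Γ) : Prop :=
  ∀ f g, (∀ t ∈ T, f (g * t) = 0) → d f g = 0

theorem IsLocal.mono [Zero M] [Zero N] {d : (Γ → M) → Γ → N} {T T' : Finset Γ}
    (hd : IsLocal d T) (h : T ⊆ T') : IsLocal d T' :=
  fun f g hf => hd f g fun t ht => hf t (h ht)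

theorem exists_isLocal_of_continuous {R : Type*} [Semiring R] [AddCommMonoid M] [Module R M]
    [AddCommMonoid N] [Module R N] [TopologicalSpace M] [TopologicalSpace N] [DiscreteTopology N]
    (d : (Γ → M) →ₗ[R] (Γ → N)) (hc : Continuous d)
    (he : ∀ γ f, d (ltv M γ f) = ltv N γ (d f)) : ∃ T, IsLocal d T := by
  have hU : IsOpen {f : Γ → M | d f 1 = 0} :=
    (isOpen_discrete {0}).preimage ((continuous_apply 1).comp hc)
  obtain ⟨T, u, hu, hTu⟩ := isOpen_pi_iff.1 hU 0 (by simp)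
  refine ⟨T, fun f g hf => ?_⟩
  have hshift : d f g = d (ltv M g⁻¹ f) 1 := by simp [he, ltv]
  rw [hshift]
  refine hTu fun t ht => ?_
  simpa [ltv, hf t ht] using (hu t ht).2

section Linear

variable {R : Type*} [Ring R] [AddCommGroup M] [Module R M] [AddCommGroup N] [Module R N]
  {d : (Γ → M) →ₗ[R] (Γ → N)} {T : Finset Γ}

theorem IsLocal.apply_eq_apply (hd : IsLocal d T) {f₁ f₂ : Γ → M} {g : Γ}
    (h : ∀ t ∈ T, f₁ (g * t) = f₂ (g * t)) : d f₁ g = d f₂ g := by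
  rw [← sub_eq_zero, ← Pi.sub_apply, ← map_sub]
  exact hd _ g fun t ht => sub_eq_zero.2 (h t ht)

variable [DecidableEq Γ] {Λ : Finset Γ}

theorem IsLocal.apply_extendByZero_restrict (hd : IsLocal d T) {g : Γ}
    (hg : ∀ t ∈ T, g * t ∈ Λ) (f : Γ → M) :
    d (extendByZero R Λ (LinearMap.funLeft R M Subtype.val f)) g = d f g :=
  hd.apply_eq_apply fun t ht => extendByZero_apply_of_mem _ (hg t ht)

theorem IsLocal.apply_extendByZero_of_notMem (hd : IsLocal d T) {g : Γ} (hg : g ∉ Λ * T⁻¹)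
    (c : Λ → M) : d (extendByZero R Λ c) g = 0 :=
  hd _ g fun t ht => extendByZero_apply_of_notMem c fun hgt =>
    hg (by simpa using mul_mem_mul hgt (inv_mem_inv ht))

end Linear

end Locality

section Generators

variable {Γ : Type*} [Group Γ] [DecidableEq Γ] {S : Finset Γ}

theorem SymmGen.pow_inv (hS : SymmGen S) (r : ℕ) : (S ^ r)⁻¹ = S ^ r := by
  have hinv : S⁻¹ = S :=
    Subset.antisymm (fun s hs => by simpa using hS.2.1 _ (mem_inv'.1 hs))
      (fun s hs => mem_inv'.2 (hS.2.1 s hs))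
  rw [← inv_pow, hinv]

theorem SymmGen.exists_mem_pow (hS : SymmGen S) (g : Γ) : ∃ r, g ∈ S ^ r := by
  have hg : g ∈ Subgroup.closure (S : Set Γ) := hS.2.2 ▸ Subgroup.mem_top g
  induction hg using Subgroup.closure_induction with
  | mem x hx => exact ⟨1, by simpa using hx⟩
  | one => exact ⟨0, by simp⟩
  | mul x y _ _ hx hy =>
    obtain ⟨r, hr⟩ := hx
    obtain ⟨r', hr'⟩ := hy
    exact ⟨r + r', pow_add S r r' ▸ mul_mem_mul hr hr'⟩
  | inv x _ hx =>
    obtain ⟨r, hr⟩ := hx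
    exact ⟨r, by rw [← hS.pow_inv, mem_inv', inv_inv]; exact hr⟩

theorem SymmGen.exists_subset_pow (hS : SymmGen S) (I : Finset Γ) : ∃ r, I ⊆ S ^ r := by
  choose r hr using hS.exists_mem_pow
  exact ⟨I.sup r, fun g hg => pow_subset_pow_right hS.1 (le_sup hg) (hr g)⟩

end Generators

section Counting

variable {Γ : Type*} [Group Γ] [DecidableEq Γ]

theorem card_sdiff_filter_mul_mem_le (Λ T : Finset Γ) :
    #(Λ \ {g ∈ Λ | ∀ t ∈ T, g * t ∈ Λ}) ≤ #T * #((Λ * T) \ Λ) := by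
  refine (card_le_card fun g hg => ?_).trans
    (card_biUnion_le_card_mul T (fun t => ((Λ * T) \ Λ).image (· * t⁻¹)) _
      fun t _ => card_image_le)
  obtain ⟨hgΛ, hgT⟩ := mem_sdiff.1 hg
  simp only [mem_filter, hgΛ, true_and, not_forall] at hgT
  obtain ⟨t, ht, hgt⟩ := hgT
  exact mem_biUnion.2 ⟨t, ht, mem_image.2
    ⟨g * t, mem_sdiff.2 ⟨mul_mem_mul hgΛ ht, hgt⟩, mul_inv_cancel_right g t⟩⟩

theorem card_inv_mul_sdiff_inv (A T : Finset Γ) : #((A⁻¹ * T) \ A⁻¹) = #((T⁻¹ * A) \ A) := by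
  have h : T⁻¹ * A = (A⁻¹ * T)⁻¹ := by rw [mul_inv_rev, inv_inv]
  rw [h, ← card_inv ((A⁻¹ * T)⁻¹ \ A)]
  congr 1
  ext g
  rw [mem_inv', Finset.mem_sdiff, Finset.mem_sdiff, mem_inv', mem_inv', inv_inv]

end Counting

section Estimates

variable {Γ M N : Type*} [Group Γ] [DecidableEq Γ]
  [AddCommGroup M] [Module (ZMod 2) M] [Module.Finite (ZMod 2) M]
  [AddCommGroup N] [Module (ZMod 2) N] [Module.Finite (ZMod 2) N]
  {d : (Γ → M) →ₗ[ZMod 2] (Γ → N)} {T : Finset Γ}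

theorem IsLocal.finrank_resSpace_ker_add_range_le (hd : IsLocal d T) (Λ : Finset Γ) :
    Module.finrank (ZMod 2) (resSpace (LinearMap.ker d) Λ) +
        Module.finrank (ZMod 2) (resSpace (LinearMap.range d) Λ) ≤
      #Λ * Module.finrank (ZMod 2) M + #T * #((Λ * T) \ Λ) * Module.finrank (ZMod 2) N := by
  set B : Finset Γ := {g ∈ Λ | ∀ t ∈ T, g * t ∈ Λ}
  set D := LinearMap.funLeft (ZMod 2) N (Subtype.val : B → Γ) ∘ₗ d ∘ₗ extendByZero (ZMod 2) Λ
  have hD (f : Γ → M) : D (LinearMap.funLeft (ZMod 2) M Subtype.val f) =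
      LinearMap.funLeft (ZMod 2) N Subtype.val (d f) :=
    funext fun g => hd.apply_extendByZero_restrict (mem_filter.1 g.2).2 f
  have hker : resSpace (LinearMap.ker d) Λ ≤ LinearMap.ker D := by
    rintro _ ⟨f, hf, rfl⟩
    rw [LinearMap.mem_ker, hD, LinearMap.mem_ker.1 hf, map_zero]
  have hrange : resSpace (LinearMap.range d) B ≤ LinearMap.range D := by
    rintro _ ⟨_, ⟨f, rfl⟩, rfl⟩
    exact ⟨_, hD f⟩
  have hnullity := LinearMap.finrank_range_add_finrank_ker D
  have hthick : Module.finrank (ZMod 2) (resSpace (LinearMap.range d) Λ) ≤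
      Module.finrank (ZMod 2) (resSpace (LinearMap.range d) B) +
        #(Λ \ B) * Module.finrank (ZMod 2) N :=
    finrank_resSpace_le_of_subset _ (filter_subset _ Λ)
  have hboundary : #(Λ \ B) * Module.finrank (ZMod 2) N ≤
      #T * #((Λ * T) \ Λ) * Module.finrank (ZMod 2) N :=
    Nat.mul_le_mul_right _ (card_sdiff_filter_mul_mem_le Λ T)
  have hker' := Submodule.finrank_mono hker
  have hrange' := Submodule.finrank_mono hrange
  rw [finrank_finset_fun] at hnullity
  omega

theorem IsLocal.le_finrank_resSpace_ker_add_range (hd : IsLocal d T) (hT : 1 ∈ T)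
    (Λ : Finset Γ) :
    #Λ * Module.finrank (ZMod 2) M ≤
      Module.finrank (ZMod 2) (resSpace (LinearMap.ker d) Λ) +
        Module.finrank (ZMod 2) (resSpace (LinearMap.range d) Λ) +
          #((Λ * T⁻¹) \ Λ) * Module.finrank (ZMod 2) N := by
  have hΛ : Λ ⊆ Λ * T⁻¹ := fun g hg => by
    simpa using mul_mem_mul hg (inv_mem_inv hT)
  set E := LinearMap.funLeft (ZMod 2) N (Subtype.val : ↥(Λ * T⁻¹) → Γ) ∘ₗ d ∘ₗ
    extendByZero (ZMod 2) Λ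
  have hker : LinearMap.ker E ≤ resSpace (LinearMap.ker d) Λ := by
    intro c hc
    refine ⟨extendByZero (ZMod 2) Λ c, ?_, funLeft_extendByZero c⟩
    refine LinearMap.mem_ker.2 (funext fun g => ?_)
    by_cases hg : g ∈ Λ * T⁻¹
    · exact congrFun (LinearMap.mem_ker.1 hc) ⟨g, hg⟩
    · exact hd.apply_extendByZero_of_notMem hg c
  have hrange : LinearMap.range E ≤ resSpace (LinearMap.range d) (Λ * T⁻¹) := by
    rintro _ ⟨c, rfl⟩
    exact ⟨_, ⟨extendByZero (ZMod 2) Λ c, rfl⟩, rfl⟩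
  have hnullity := LinearMap.finrank_range_add_finrank_ker E
  have hthick := finrank_resSpace_le_of_subset (LinearMap.range d) hΛ
  have hker' := Submodule.finrank_mono hker
  have hrange' := Submodule.finrank_mono hrange
  rw [finrank_finset_fun] at hnullity
  omega

theorem IsLocal.abs_finrank_resSpace_ker_add_range_sub_le (hd : IsLocal d T) (h1T : 1 ∈ T)
    (hT : T⁻¹ = T) (Λ : Finset Γ) :
    |(Module.finrank (ZMod 2) (resSpace (LinearMap.ker d) Λ) +
        Module.finrank (ZMod 2) (resSpace (LinearMap.range d) Λ) : ℝ) -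
        #Λ * Module.finrank (ZMod 2) M| ≤
      (#T + 1) * #((Λ * T) \ Λ) * Module.finrank (ZMod 2) N := by
  have hupper := hd.finrank_resSpace_ker_add_range_le Λ
  have hlower := hd.le_finrank_resSpace_ker_add_range h1T Λ
  rw [hT] at hlower
  set a := Module.finrank (ZMod 2) (resSpace (LinearMap.ker d) Λ)
  set b := Module.finrank (ZMod 2) (resSpace (LinearMap.range d) Λ)
  set δ := #((Λ * T) \ Λ)
  have hu : (a + b : ℝ) ≤ #Λ * Module.finrank (ZMod 2) M +
      #T * δ * Module.finrank (ZMod 2) N := by exact_mod_cast hupper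
  have hl : (#Λ * Module.finrank (ZMod 2) M : ℝ) ≤ a + b + δ * Module.finrank (ZMod 2) N := by
    exact_mod_cast hlower
  have hδ : (0 : ℝ) ≤ δ * Module.finrank (ZMod 2) N := by positivity
  have hTδ : (0 : ℝ) ≤ #T * δ * Module.finrank (ZMod 2) N := by positivity
  rw [abs_sub_le_iff]
  constructor <;> linarith

end Estimates

theorem abs_mul_sum_alternating_sub_le (x : ℝ) (k A e : ℕ → ℝ) {n : ℕ} (hA : A (n + 1) = 0)
    (h : ∀ p ≤ n, |A p + A (p + 1) - x * k p| ≤ e p) :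
    |x * ∑ p ∈ range (n + 1), (-1) ^ p * k p - A 0| ≤ ∑ p ∈ range (n + 1), e p := by
  have htelescope : ∑ p ∈ range (n + 1), (-1) ^ p * (A p + A (p + 1)) = A 0 := by
    have := sum_range_sub' (fun p => (-1 : ℝ) ^ p * A p) (n + 1)
    simp only [hA, mul_zero, sub_zero, pow_zero, one_mul] at this
    rw [← this]
    exact sum_congr rfl fun p _ => by ring
  rw [← htelescope, mul_sum, ← sum_sub_distrib]
  refine (abs_sum_le_sum_abs _ _).trans (sum_le_sum fun p hp => ?_)
  have hsign : x * ((-1) ^ p * k p) - (-1) ^ p * (A p + A (p + 1)) =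
      -((-1) ^ p * (A p + A (p + 1) - x * k p)) := by ring
  rw [hsign, abs_neg, abs_mul, abs_neg_one_pow, one_mul]
  exact h p (Nat.lt_succ_iff.1 (mem_range.1 hp))

theorem abs_card_mul_alternating_sum_sub_finrank_le {Γ : Type*} [Group Γ] [DecidableEq Γ]
    {k : ℕ → ℕ} {d : ∀ p, (Γ → Fin (k p) → ZMod 2) →ₗ[ZMod 2] (Γ → Fin (k (p + 1)) → ZMod 2)}
    {n : ℕ} (hk : k (n + 1) = 0)
    (hexact : ∀ p ≤ n, LinearMap.ker (d (p + 1)) = LinearMap.range (d p))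
    {T : Finset Γ} (h1T : 1 ∈ T) (hT : T⁻¹ = T) (hloc : ∀ p ≤ n, IsLocal (d p) T)
    (Λ : Finset Γ) :
    |#Λ * ∑ p ∈ range (n + 1), (-1) ^ p * (k p : ℝ) -
        Module.finrank (ZMod 2) (resSpace (LinearMap.ker (d 0)) Λ)| ≤
      ∑ p ∈ range (n + 1), (#T + 1) * #((Λ * T) \ Λ) * (k (p + 1) : ℝ) := by
  refine abs_mul_sum_alternating_sub_le _ _
    (fun p => Module.finrank (ZMod 2) (resSpace (LinearMap.ker (d p)) Λ)) _ ?_ fun p hp => ?_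
  · have : IsEmpty (Fin (k (n + 1))) := by rw [hk]; infer_instance
    simp [Module.finrank_zero_of_subsingleton]
  · have := (hloc p hp).abs_finrank_resSpace_ker_add_range_sub_le h1T hT Λ
    rwa [← hexact p hp, Module.finrank_fin_fun, Module.finrank_fin_fun] at this

theorem entropy_eq_zero_of_finite {Γ M : Type*} [AddCommGroup M] [Module (ZMod 2) M]
    {F : ℕ → Finset Γ} (hF : Tendsto (fun m => #(F m)) atTop atTop)
    (W : Submodule (ZMod 2) (Γ → M)) [Module.Finite (ZMod 2) W] : entropy F W = 0 := by
  have hbound : Tendsto (fun m => (Module.finrank (ZMod 2) W : ℝ) / #(F m)) atTop (𝓝 0) :=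
    tendsto_const_nhds.div_atTop (tendsto_natCast_atTop_atTop.comp hF)
  refine (tendsto_of_tendsto_of_tendsto_of_le_of_le tendsto_const_nhds hbound
    (fun m => by positivity) fun m => ?_).limsup_eq
  gcongr
  exact_mod_cast Submodule.finrank_map_le _ W

section Folner

variable {Γ : Type*} [Group Γ] [DecidableEq Γ] {S : Finset Γ} {F : ℕ → Finset Γ}

theorem FolnerSeq.tendsto_card_atTop [Infinite Γ] (hF : FolnerSeq S F) :
    Tendsto (fun m => #(F m)) atTop atTop := by
  refine tendsto_atTop_atTop.2 fun N => ?_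
  obtain ⟨s, hs⟩ := Infinite.exists_subset_card_eq Γ N
  choose m hm using hF.exhaust
  exact ⟨s.sup m, fun j hj =>
    hs ▸ card_le_card fun g hg => hF.mono ((le_sup hg).trans hj) (hm g)⟩

theorem FolnerSeq.eq_zero_of_abs_mul_card_le [Infinite Γ] (hF : FolnerSeq S F) {c C B : ℝ}
    {r : ℕ} (h : ∀ m, |c| * #(F m) ≤ C * #((S ^ r * F m) \ F m) + B) : c = 0 := by
  have hcard := (tendsto_natCast_atTop_atTop (R := ℝ)).comp hF.tendsto_card_atTop
  have hbound : Tendsto (fun m => C * (#((S ^ r * F m) \ F m) / #(F m) : ℝ) + B / #(F m))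
      atTop (𝓝 0) := by
    simpa using ((hF.folner r).const_mul C).add (tendsto_const_nhds.div_atTop hcard)
  refine abs_nonpos_iff.1 (ge_of_tendsto hbound ?_)
  filter_upwards [hcard.eventually_gt_atTop 0] with m hm
  rw [mul_div_assoc', ← add_div, le_div_iff₀ (show (0 : ℝ) < #(F m) from hm)]
  exact h m

end Folner

theorem entropy_betti_vanish_of_contractible [Infinite G]
    (S : Finset G) (hS : SymmGen S) (hF : FolnerSeq S F)
    (n : ℕ) (k : ℕ → ℕ) (hk : ∀ p, n < p → k p = 0)
    (d : ∀ p : ℕ, (G → Fin (k p) → ZMod 2) →ₗ[ZMod 2] (G → Fin (k (p + 1)) → ZMod 2))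
    (hdcont : ∀ p, Continuous (d p))
    (hdequi : ∀ p, ∀ γ : G, ∀ f, d p (ltv _ γ f) = ltv _ γ (d p f))
    -- contractibility: vanishing of cohomology in positive degrees …
    (hexact : ∀ p, LinearMap.ker (d (p + 1)) = LinearMap.range (d p))
    -- … and `H⁰(K̃,𝔽₂) = 𝔽₂`
    (hH0 : Module.finrank (ZMod 2) ↥(LinearMap.ker (d 0)) = 1) :
    (∀ p ≤ n, bE F k d p = 0) ∧
      ∑ p ∈ Finset.range (n + 1), (-1 : ℝ) ^ p * (k p : ℝ) = 0 := by
  have : Module.Finite (ZMod 2) (LinearMap.ker (d 0)) := FiniteDimensional.of_finrank_eq_succ hH0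
  refine ⟨fun p _ => ?_, ?_⟩
  · cases p with
    | zero => simp [bE, entropy_eq_zero_of_finite hF.tendsto_card_atTop]
    | succ q => simp [bE, hexact q]
  choose T hT using fun p => exists_isLocal_of_continuous (d p) (hdcont p) (hdequi p)
  obtain ⟨r, hr⟩ := hS.exists_subset_pow ((range (n + 1)).biUnion T)
  have hloc (p : ℕ) (hp : p ≤ n) : IsLocal (d p) (S ^ r) :=
    (hT p).mono ((subset_biUnion_of_mem T (mem_range.2 (Nat.lt_succ_of_le hp))).trans hr)
  set χ := ∑ p ∈ range (n + 1), (-1 : ℝ) ^ p * (k p : ℝ)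
  -- `d p` is local on the right (`g * S ^ r`) while the Følner condition is on the left
  -- (`S ^ r * F m`), so the windows are the inverted Følner sets.
  refine hF.eq_zero_of_abs_mul_card_le (r := r) (B := 1)
    (C := (#(S ^ r) + 1) * ∑ p ∈ range (n + 1), (k (p + 1) : ℝ)) fun m => ?_
  have hscale := abs_card_mul_alternating_sum_sub_finrank_le (hk _ n.lt_succ_self)
    (fun p _ => hexact p) (one_mem_pow hS.1) (hS.pow_inv r) hloc (F m)⁻¹
  rw [card_inv, card_inv_mul_sdiff_inv, hS.pow_inv, ← mul_sum] at hscale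
  have hH0' : (Module.finrank (ZMod 2) (resSpace (LinearMap.ker (d 0)) (F m)⁻¹) : ℝ) ≤ 1 := by
    exact_mod_cast hH0 ▸ Submodule.finrank_map_le _ _
  have htriangle := abs_sub_abs_le_abs_sub (#(F m) * χ)
    (Module.finrank (ZMod 2) (resSpace (LinearMap.ker (d 0)) (F m)⁻¹))
  rw [abs_mul, Nat.abs_cast, Nat.abs_cast] at htriangle
  linarith
end
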